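/- For all n₁, n₂ ∈ ℕ and all θ₁, θ₂ ≥ 0, one has ∑_{k=1}^{n₁} (1/k)(θ₁^{n₁−k} θ₂^{n₂+k} − θ₁^{n₁} θ₂^{n₂}) + ∑_{k=1}^{n₂} (1/k)(θ₁^{n₁+k} θ₂^{n₂−k} − θ₁^{n₁} θ₂^{n₂}) = ∫₀¹ u^{−1} [ ((1−u)θ₁ + u θ₂)^{n₁} θ₂^{n₂} − θ₁^{n₁} θ₂^{n₂} ] du + ∫₀¹ u^{−1} [ θ₁^{n₁} ((1−u)θ₂ + u θ₁)^{n₂} − θ₁^{n₁} θ₂^{n₂} ] du, where both u-integrals converge absolutely. (This is the single-edge duality, with duality function D(θ,η) = θ₁^{η₁}θ₂^{η₂}, between the discrete harmonic process and its hidden-parameter model.) -/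

import Mathlib

open MeasureTheory Set

/-!
With `z = (1 - u) x + u y` one has `z - x = u (y - x)`, so the geometric-sum factorisation
`z ^ n - x ^ n = (z - x) ∑_{j<n} z ^ j x ^ (n-1-j)` turns `u⁻¹ (z ^ n - x ^ n)` into a polynomial
in `u`; integrating it termwise over `[0, 1]` by the substitution `u ↦ z` gives
`∑_{k=1}^n k⁻¹ x ^ (n-k) (y ^ k - x ^ k)`.
Each half of the hidden-parameter generator applied to `θ₁ ^ n₁ θ₂ ^ n₂` is this identity times
the power of the untouched coordinate, and it yields the matching half of the discrete generator.
-/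

lemma inv_mul_pow_sub_pow_eq_sub_mul_geom_sum (x y : ℝ) (n : ℕ) {u : ℝ} (hu : u ≠ 0) :
    u⁻¹ * (((1 - u) * x + u * y) ^ n - x ^ n) =
      (y - x) * ∑ j ∈ Finset.range n, ((1 - u) * x + u * y) ^ j * x ^ (n - 1 - j) := by
  rw [← geom_sum₂_mul, show (1 - u) * x + u * y - x = u * (y - x) by ring]
  field_simp

lemma sub_mul_integral_pow_convex_comb (x y : ℝ) (j : ℕ) :
    (y - x) * ∫ u in (0 : ℝ)..1, ((1 - u) * x + u * y) ^ j =
      (y ^ (j + 1) - x ^ (j + 1)) / (j + 1) := by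
  have hline : ∀ u : ℝ, (1 - u) * x + u * y = (y - x) * u + x := fun u => by ring
  simp_rw [hline]
  rw [intervalIntegral.mul_integral_comp_mul_add (f := fun t : ℝ => t ^ j), integral_pow]
  ring_nf

lemma sum_range_pow_mul_sub_pow_div (x y : ℝ) (n : ℕ) :
    ∑ j ∈ Finset.range n, x ^ (n - 1 - j) * ((y ^ (j + 1) - x ^ (j + 1)) / (j + 1)) =
      ∑ k ∈ Finset.Icc 1 n, (k : ℝ)⁻¹ * (x ^ (n - k) * y ^ k - x ^ n) := by
  rw [← Finset.Ico_add_one_right_eq_Icc, Finset.sum_Ico_eq_sum_range, Nat.add_sub_cancel]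
  refine Finset.sum_congr rfl fun j hj => ?_
  have hxn : x ^ (n - 1 - j) * x ^ (j + 1) = x ^ n := by
    rw [← pow_add]; congr 1; have := Finset.mem_range.mp hj; omega
  rw [show n - (1 + j) = n - 1 - j by omega, ← hxn]
  push_cast
  field_simp
  ring

lemma intervalIntegral_sub_mul_geom_sum (x y : ℝ) (n : ℕ) :
    ∫ u in (0 : ℝ)..1,
        (y - x) * ∑ j ∈ Finset.range n, ((1 - u) * x + u * y) ^ j * x ^ (n - 1 - j) =
      ∑ k ∈ Finset.Icc 1 n, (k : ℝ)⁻¹ * (x ^ (n - k) * y ^ k - x ^ n) := by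
  rw [← sum_range_pow_mul_sub_pow_div, intervalIntegral.integral_const_mul,
    intervalIntegral.integral_finsetSum fun j _ =>
      (by fun_prop : Continuous _).intervalIntegrable 0 1,
    Finset.mul_sum]
  refine Finset.sum_congr rfl fun j _ => ?_
  rw [intervalIntegral.integral_mul_const, ← sub_mul_integral_pow_convex_comb]
  ring

lemma integrableOn_inv_mul_pow_sub_pow (x y : ℝ) (n : ℕ) :
    IntegrableOn (fun u : ℝ => u⁻¹ * (((1 - u) * x + u * y) ^ n - x ^ n)) (Ioo 0 1) := by
  refine IntegrableOn.congr_fun ?_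
    (fun u hu => (inv_mul_pow_sub_pow_eq_sub_mul_geom_sum x y n hu.1.ne').symm) measurableSet_Ioo
  exact (by fun_prop : Continuous _).integrableOn_Icc.mono_set Ioo_subset_Icc_self

lemma integral_inv_mul_pow_sub_pow (x y : ℝ) (n : ℕ) :
    ∫ u in Ioo (0 : ℝ) 1, u⁻¹ * (((1 - u) * x + u * y) ^ n - x ^ n) =
      ∑ k ∈ Finset.Icc 1 n, (k : ℝ)⁻¹ * (x ^ (n - k) * y ^ k - x ^ n) := by
  rw [setIntegral_congr_fun measurableSet_Ioo
      fun u hu => inv_mul_pow_sub_pow_eq_sub_mul_geom_sum x y n hu.1.ne',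
    ← integral_Ioc_eq_integral_Ioo, ← intervalIntegral.integral_of_le zero_le_one,
    intervalIntegral_sub_mul_geom_sum]

theorem discrete_harmonic_duality (n₁ n₂ : ℕ) (θ₁ θ₂ : ℝ) :
    IntegrableOn (fun u : ℝ =>
      u⁻¹ * (((1 - u) * θ₁ + u * θ₂) ^ n₁ * θ₂ ^ n₂ - θ₁ ^ n₁ * θ₂ ^ n₂))
      (Set.Ioo 0 1) volume ∧
    IntegrableOn (fun u : ℝ =>
      u⁻¹ * (θ₁ ^ n₁ * ((1 - u) * θ₂ + u * θ₁) ^ n₂ - θ₁ ^ n₁ * θ₂ ^ n₂))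
      (Set.Ioo 0 1) volume ∧
    (∑ k ∈ Finset.Icc 1 n₁, (k : ℝ)⁻¹ * (θ₁ ^ (n₁ - k) * θ₂ ^ (n₂ + k) - θ₁ ^ n₁ * θ₂ ^ n₂)) +
    (∑ k ∈ Finset.Icc 1 n₂, (k : ℝ)⁻¹ * (θ₁ ^ (n₁ + k) * θ₂ ^ (n₂ - k) - θ₁ ^ n₁ * θ₂ ^ n₂))
      = (∫ u in Set.Ioo (0:ℝ) 1,
          u⁻¹ * (((1 - u) * θ₁ + u * θ₂) ^ n₁ * θ₂ ^ n₂ - θ₁ ^ n₁ * θ₂ ^ n₂)) +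
        (∫ u in Set.Ioo (0:ℝ) 1,
          u⁻¹ * (θ₁ ^ n₁ * ((1 - u) * θ₂ + u * θ₁) ^ n₂ - θ₁ ^ n₁ * θ₂ ^ n₂)) := by
  have hf₁ : (fun u : ℝ =>
      u⁻¹ * (((1 - u) * θ₁ + u * θ₂) ^ n₁ * θ₂ ^ n₂ - θ₁ ^ n₁ * θ₂ ^ n₂)) =
      fun u => θ₂ ^ n₂ * (u⁻¹ * (((1 - u) * θ₁ + u * θ₂) ^ n₁ - θ₁ ^ n₁)) := by
    funext u; ring
  have hf₂ : (fun u : ℝ =>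
      u⁻¹ * (θ₁ ^ n₁ * ((1 - u) * θ₂ + u * θ₁) ^ n₂ - θ₁ ^ n₁ * θ₂ ^ n₂)) =
      fun u => θ₁ ^ n₁ * (u⁻¹ * (((1 - u) * θ₂ + u * θ₁) ^ n₂ - θ₂ ^ n₂)) := by
    funext u; ring
  have hs₁ : ∑ k ∈ Finset.Icc 1 n₁,
      (k : ℝ)⁻¹ * (θ₁ ^ (n₁ - k) * θ₂ ^ (n₂ + k) - θ₁ ^ n₁ * θ₂ ^ n₂) =
      θ₂ ^ n₂ * ∑ k ∈ Finset.Icc 1 n₁, (k : ℝ)⁻¹ * (θ₁ ^ (n₁ - k) * θ₂ ^ k - θ₁ ^ n₁) := by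
    rw [Finset.mul_sum]
    exact Finset.sum_congr rfl fun k _ => by rw [pow_add]; ring
  have hs₂ : ∑ k ∈ Finset.Icc 1 n₂,
      (k : ℝ)⁻¹ * (θ₁ ^ (n₁ + k) * θ₂ ^ (n₂ - k) - θ₁ ^ n₁ * θ₂ ^ n₂) =
      θ₁ ^ n₁ * ∑ k ∈ Finset.Icc 1 n₂, (k : ℝ)⁻¹ * (θ₂ ^ (n₂ - k) * θ₁ ^ k - θ₂ ^ n₂) := by
    rw [Finset.mul_sum]
    exact Finset.sum_congr rfl fun k _ => by rw [pow_add]; ring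
  refine ⟨hf₁ ▸ (integrableOn_inv_mul_pow_sub_pow θ₁ θ₂ n₁).const_mul _,
    hf₂ ▸ (integrableOn_inv_mul_pow_sub_pow θ₂ θ₁ n₂).const_mul _, ?_⟩
  rw [hf₁, hf₂, integral_const_mul, integral_const_mul, integral_inv_mul_pow_sub_pow,
    integral_inv_mul_pow_sub_pow, hs₁, hs₂]
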